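/- If β is a Pisot number, then the (−β)-shift S_{−β} is a sofic system, i.e. the language of finite factors of elements of S_{−β} is regular. -/

import Mathlib

/-- The (-β)-transformation `T_{-β}(x) = -βx - ⌊-βx + β/(β+1)⌋`. -/
noncomputable def negBetaT (β : ℝ) (x : ℝ) : ℝ :=
  -β * x - ⌊-β * x + β / (β + 1)⌋

/-- The digits of the (-β)-expansion: `negBetaDigit β x n` is the digit
`x_{n+1} = ⌊-β T_{-β}^n(x) + β/(β+1)⌋`. -/
noncomputable def negBetaDigit (β : ℝ) (x : ℝ) (n : ℕ) : ℤ :=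
  ⌊-β * (negBetaT β)^[n] x + β / (β + 1)⌋

/-- The word `d = d_{-β}(-β/(β+1))`. -/
noncomputable def dmb (β : ℝ) : ℕ → ℤ := negBetaDigit β (-β / (β + 1))

/-- Strict alternate order on one-sided infinite words (index `k` holds the letter at
position `k+1`, whence the sign `(-1)^(k+1)`). -/
def AltLt (u v : ℕ → ℤ) : Prop :=
  ∃ k : ℕ, (∀ i < k, u i = v i) ∧ (-1 : ℤ) ^ (k + 1) * (u k - v k) < 0

/-- Non-strict alternate order. -/
def AltLe (u v : ℕ → ℤ) : Prop := u = v ∨ AltLt u v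

/-- The one-sided word read in the bi-infinite word `w` from position `n` on. -/
def shiftSeq (w : ℤ → ℤ) (n : ℤ) : ℕ → ℤ := fun i => w (n + i)

open scoped Classical

/-- The word `d* = d*_{-β}(1/(β+1))`: if `d = (d_1 ⋯ d_{2p+1})^ω` is purely periodic with
(minimal) odd period `2p+1`, then `d* = (0 d_1 ⋯ d_{2p} (d_{2p+1}-1))^ω`; otherwise
`d* = 0d`. -/
noncomputable def dstar (β : ℝ) : ℕ → ℤ :=
  if h : ∃ p : ℕ, 0 < p ∧ Odd p ∧ ∀ i, dmb β (i + p) = dmb β i then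
    fun n =>
      let p := Nat.find h
      let r := n % (p + 1)
      if r = 0 then 0 else if r = p then dmb β (p - 1) - 1 else dmb β (r - 1)
  else fun n => if n = 0 then 0 else dmb β (n - 1)

/-- The (-β)-shift: all bi-infinite words over `A_{-β} = {0,…,⌊β⌋}` all of whose shifts
lie alternately between `d` and `d*`. -/
def negBetaShift (β : ℝ) : Set (ℤ → ℤ) :=
  {w | (∀ i, 0 ≤ w i ∧ w i ≤ ⌊β⌋) ∧
    ∀ n : ℤ, AltLe (dmb β) (shiftSeq w n) ∧ AltLe (shiftSeq w n) (dstar β)}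

/-- `u` is a factor of the bi-infinite word `w`. -/
def IsFactorOf (u : List ℤ) (w : ℤ → ℤ) : Prop :=
  ∃ n : ℤ, ∀ i : ℕ, i < u.length → u.getD i 0 = w (n + i)

/-- The language of finite factors of a set of bi-infinite words. -/
def factorLang (S : Set (ℤ → ℤ)) : Language ℤ :=
  {u | ∃ w ∈ S, IsFactorOf u w}

/-- A Pisot number: an algebraic integer `β > 1` all of whose other complex conjugates
have modulus strictly less than `1`. -/
def IsPisot (β : ℝ) : Prop :=
  1 < β ∧ IsIntegral ℤ β ∧
    ∀ z : ℂ, Polynomial.aeval z (minpoly ℤ β) = 0 → z ≠ (β : ℂ) → ‖z‖ < 1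

/-!
For Pisot `β` the `T_{-β}`-orbit of `-β/(β+1)` is finite: multiplied by `β + 1` it becomes a
sequence of algebraic integers of `ℚ(β)`, bounded under the real embedding because the orbit stays
in `I_{-β}`, and under every other embedding because there it obeys a recurrence contracting by the
conjugate of `-β`. Finitely many algebraic integers have all conjugates bounded, so `d` and hence
`d*` have only finitely many tails.

Consequently the set of one-sided words allowed at each position of `S_{-β}` has finitely many
left quotients by finite words. Replacing a factor `u` of a point of the shift by a word `u'` with
the same quotient data gives again a point of the shift, so the factor language has finitely many
left quotients and is regular by the Myhill–Nerode theorem.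
-/

open Set

section StreamQuotient

variable {α : Type*}

def streamQuotient (X : Set (Stream' α)) (u : List α) : Set (Stream' α) := {s | u ++ₛ s ∈ X}

lemma streamQuotient_append (X : Set (Stream' α)) (u v : List α) :
    streamQuotient X (u ++ v) = streamQuotient (streamQuotient X u) v := by
  ext s
  change (u ++ v) ++ₛ s ∈ X ↔ u ++ₛ (v ++ₛ s) ∈ X
  rw [Stream'.append_append_stream]

def IsQuotientClosed (𝓕 : Set (Set (Stream' α))) : Prop :=
  ∀ X ∈ 𝓕, ∀ a, streamQuotient X [a] ∈ 𝓕

namespace IsQuotientClosed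

variable {𝓕 𝓖 : Set (Set (Stream' α))}

lemma streamQuotient_mem (h : IsQuotientClosed 𝓕) {X : Set (Stream' α)} (hX : X ∈ 𝓕)
    (u : List α) : streamQuotient X u ∈ 𝓕 := by
  induction u generalizing X with
  | nil => exact hX
  | cons a u ih =>
    rw [← List.singleton_append, streamQuotient_append]
    exact ih (h X hX a)

lemma image2_inter (h𝓕 : IsQuotientClosed 𝓕) (h𝓖 : IsQuotientClosed 𝓖) :
    IsQuotientClosed (image2 (· ∩ ·) 𝓕 𝓖) := by
  rintro _ ⟨X, hX, Y, hY, rfl⟩ a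
  exact ⟨_, h𝓕 X hX a, _, h𝓖 Y hY a, rfl⟩

lemma finite_range_streamQuotient (h : IsQuotientClosed 𝓕) (hfin : 𝓕.Finite)
    {X : Set (Stream' α)} (hX : X ∈ 𝓕) : (range (streamQuotient X)).Finite :=
  hfin.subset (range_subset_iff.2 (h.streamQuotient_mem hX))

end IsQuotientClosed

lemma setOf_or_and_mem_mem (p q : Prop) (Y : Set α) :
    {s | p ∨ q ∧ s ∈ Y} ∈ ({∅, univ, Y} : Set (Set α)) := by
  by_cases hp : p <;> by_cases hq : q <;> simp [hp, hq]

lemma isQuotientClosed_head (A : Set α) :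
    IsQuotientClosed ({{s | s.head ∈ A}, ∅, univ} : Set (Set (Stream' α))) := by
  rintro X (rfl | rfl | rfl) a
  · by_cases ha : a ∈ A
    · exact Or.inr (Or.inr (eq_univ_of_forall fun s => ha))
    · exact Or.inr (Or.inl (eq_empty_of_forall_notMem fun s hs => ha hs))
  · exact Or.inr (Or.inl rfl)
  · exact Or.inr (Or.inr rfl)

lemma finite_range_drop_of_periodic {f : Stream' α} {q : ℕ} (hq : 0 < q)
    (hf : Function.Periodic f q) : (range fun j => f.drop j).Finite := by
  refine ((finite_Iio q).image fun j => f.drop j).subset ?_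
  rintro _ ⟨j, rfl⟩
  refine ⟨j % q, Nat.mod_lt j hq, funext fun i => ?_⟩
  change f (i + j % q) = f (i + j)
  conv_rhs => rw [← Nat.mod_add_div j q, ← add_assoc, mul_comm]
  exact ((hf.nat_mul (j / q)) _).symm

lemma finite_range_drop_cons {s : Stream' α} (a : α) (hs : (range fun j => s.drop j).Finite) :
    (range fun j => (Stream'.cons a s).drop j).Finite := by
  refine (hs.insert (Stream'.cons a s)).subset ?_
  rintro _ ⟨_ | j, rfl⟩
  · exact mem_insert _ _
  · exact mem_insert_of_mem _ ⟨j, rfl⟩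

lemma Stream'.drop_append_stream_of_le_length {l : List α} {k : ℕ} (h : k ≤ l.length)
    (s : Stream' α) : (l ++ₛ s).drop k = l.drop k ++ₛ s := by
  conv_lhs => rw [← List.take_append_drop k l, Stream'.append_append_stream]
  simpa [h] using Stream'.drop_append_stream (l.take k) (l.drop k ++ₛ s)

end StreamQuotient

section AltOrder

lemma altLt_cons_cons {a b : ℤ} {s t : Stream' ℤ} :
    AltLt (Stream'.cons a s) (Stream'.cons b t) ↔ b < a ∨ a = b ∧ AltLt t s := by
  constructor
  · rintro ⟨_ | k, hagree, hk⟩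
    · left
      change (-1 : ℤ) ^ 1 * (a - b) < 0 at hk
      linarith
    · have hab : a = b := hagree 0 k.succ_pos
      refine Or.inr ⟨hab, k, fun i hi => (hagree (i + 1) (by omega)).symm, ?_⟩
      change (-1 : ℤ) ^ (k + 1 + 1) * (s k - t k) < 0 at hk
      rw [pow_succ] at hk
      linarith
  · rintro (hlt | ⟨rfl, k, hagree, hk⟩)
    · refine ⟨0, fun i hi => absurd hi i.not_lt_zero, ?_⟩
      change (-1 : ℤ) ^ 1 * (a - b) < 0
      linarith
    · refine ⟨k + 1, fun i hi => ?_, ?_⟩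
      · rcases i with _ | i
        · rfl
        · exact (hagree i (by omega)).symm
      · change (-1 : ℤ) ^ (k + 1 + 1) * (s k - t k) < 0
        rw [pow_succ]
        linarith

lemma altLe_cons_cons {a b : ℤ} {s t : Stream' ℤ} :
    AltLe (Stream'.cons a s) (Stream'.cons b t) ↔ b < a ∨ a = b ∧ AltLe t s := by
  unfold AltLe
  rw [altLt_cons_cons]
  constructor
  · rintro (h | hlt | ⟨rfl, hlt⟩)
    · obtain ⟨rfl, rfl⟩ := Stream'.cons_injective2 h
      exact Or.inr ⟨rfl, Or.inl rfl⟩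
    exacts [Or.inl hlt, Or.inr ⟨rfl, Or.inr hlt⟩]
  · rintro (hlt | ⟨rfl, rfl | hlt⟩)
    exacts [Or.inr (Or.inl hlt), Or.inl rfl, Or.inr (Or.inr ⟨rfl, hlt⟩)]

def altLeFamily (τ : Stream' ℤ) : Set (Set (Stream' ℤ)) :=
  {∅, univ} ∪ (range fun j => {s : Stream' ℤ | AltLe (τ.drop j) s}) ∪
    range fun j => {s : Stream' ℤ | AltLe s (τ.drop j)}

lemma altLeFamily_finite {τ : Stream' ℤ} (hτ : (range fun j => τ.drop j).Finite) :
    (altLeFamily τ).Finite := by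
  refine ((toFinite _).union ((hτ.image fun σ => {s : Stream' ℤ | AltLe σ s}).subset ?_)).union
    ((hτ.image fun σ => {s : Stream' ℤ | AltLe s σ}).subset ?_) <;>
  exact range_subset_iff.2 fun j => ⟨_, ⟨j, rfl⟩, rfl⟩

lemma isQuotientClosed_altLeFamily (τ : Stream' ℤ) : IsQuotientClosed (altLeFamily τ) := by
  have hdrop : ∀ j, τ.drop j = Stream'.cons (τ j) (τ.drop (j + 1)) := fun j => by
    funext i
    rcases i with _ | i
    · exact congrArg τ (zero_add j)
    · exact congrArg τ (by omega)
  have hsub : ∀ {Y}, Y ∈ altLeFamily τ →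
      ({∅, univ, Y} : Set (Set (Stream' ℤ))) ⊆ altLeFamily τ := by
    rintro Y hY _ (rfl | rfl | rfl)
    exacts [Or.inl (Or.inl (Or.inl rfl)), Or.inl (Or.inl (Or.inr rfl)), hY]
  rintro _ (((rfl | rfl) | ⟨j, rfl⟩) | ⟨j, rfl⟩) a
  · exact Or.inl (Or.inl (Or.inl (eq_empty_of_forall_notMem fun s hs => hs)))
  · exact Or.inl (Or.inl (Or.inr (eq_univ_of_forall fun s => trivial)))
  · refine hsub (Or.inr ⟨j + 1, rfl⟩) ?_
    convert setOf_or_and_mem_mem (a < τ j) (τ j = a) {s : Stream' ℤ | AltLe s (τ.drop (j + 1))}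
      using 1
    ext s
    change AltLe (τ.drop j) (Stream'.cons a s) ↔ _
    rw [hdrop j, altLe_cons_cons]
    rfl
  · refine hsub (Or.inl (Or.inr ⟨j + 1, rfl⟩)) ?_
    convert setOf_or_and_mem_mem (τ j < a) (a = τ j) {s : Stream' ℤ | AltLe (τ.drop (j + 1)) s}
      using 1
    ext s
    change AltLe (Stream'.cons a s) (τ.drop j) ↔ _
    rw [hdrop j, altLe_cons_cons]
    rfl

end AltOrder

section FactorLanguage

/-- `shiftSeq` typed as a stream, so that the `Stream'` API applies to it. -/
def shiftStream (w : ℤ → ℤ) (n : ℤ) : Stream' ℤ := shiftSeq w n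

lemma shiftStream_add_nat (w : ℤ → ℤ) (n : ℤ) (k : ℕ) :
    shiftStream w (n + k) = Stream'.drop k (shiftStream w n) := by
  funext i
  change w (n + k + i) = w (n + ↑(i + k))
  congr 1
  push_cast
  ring

lemma shiftStream_eq_take_append (w : ℤ → ℤ) {m n : ℤ} (h : m ≤ n) :
    shiftStream w m = Stream'.take (n - m).toNat (shiftStream w m) ++ₛ shiftStream w n := by
  have h := Stream'.append_take_drop (n - m).toNat (shiftStream w m)
  rw [← shiftStream_add_nat, show m + ((n - m).toNat : ℤ) = n by omega] at h
  exact h.symm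

lemma isFactorOf_iff_exists_append {u : List ℤ} {w : ℤ → ℤ} :
    IsFactorOf u w ↔ ∃ n s, shiftStream w n = u ++ₛ s := by
  constructor
  · rintro ⟨n, hn⟩
    refine ⟨n, Stream'.drop u.length (shiftStream w n), ?_⟩
    suffices htake : Stream'.take u.length (shiftStream w n) = u by
      rw [← htake, Stream'.length_take, Stream'.append_take_drop]
    refine List.ext_getElem (Stream'.length_take _ _) fun i hi hi' => ?_
    rw [Stream'.take_get, ← List.getD_eq_getElem u 0 hi', hn i hi']
    rfl
  · rintro ⟨n, s, hs⟩
    refine ⟨n, fun i hi => ?_⟩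
    rw [List.getD_eq_getElem u 0 hi, ← Stream'.get_append_left i u s hi, ← hs]
    rfl

lemma exists_update_shiftStream (w : ℤ → ℤ) (n : ℤ) (s : Stream' ℤ) :
    ∃ W : ℤ → ℤ, (∀ m < n, W m = w m) ∧ shiftStream W n = s := by
  refine ⟨fun m => if m < n then w m else s (m - n).toNat, fun m hm => if_pos hm, ?_⟩
  funext i
  change (if n + i < n then _ else s (n + i - n).toNat) = s i
  rw [if_neg (by omega)]
  congr 1
  omega

variable (X : Set (Stream' ℤ))

/-- What decides whether `u` may be replaced by another word inside a point of the shift defined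
by `X`: the quotients by `u` of all quotients of `X` govern the positions left of `u`, the quotients
of `X` by the suffixes of `u` the positions inside it. -/
def quotientProfile (u : List ℤ) :
    (range (streamQuotient X) → Set (Stream' ℤ)) × Set (Set (Stream' ℤ)) :=
  (fun R => streamQuotient R u, (fun j => streamQuotient X (u.drop j)) '' Iio u.length)

lemma finite_range_quotientProfile (hX : (range (streamQuotient X)).Finite) :
    (range (quotientProfile X)).Finite := by
  have := hX.to_subtype
  refine ((Finite.pi' fun _ => hX).prod hX.finite_subsets).subset ?_
  rintro _ ⟨u, rfl⟩
  refine ⟨fun ⟨_, v, hv⟩ => ⟨v ++ u, ?_⟩, ?_⟩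
  · rw [streamQuotient_append, hv]
    rfl
  · rintro _ ⟨j, -, rfl⟩
    exact ⟨_, rfl⟩

variable {X}

lemma drop_append_mem_of_quotientProfile_subset {u u' : List ℤ} {y : Stream' ℤ}
    (hy : ∀ k, (u ++ₛ y).drop k ∈ X) (h : (quotientProfile X u').2 ⊆ (quotientProfile X u).2)
    (k : ℕ) : (u' ++ₛ y).drop k ∈ X := by
  rcases le_or_gt u'.length k with hk | hk
  · rw [← Nat.add_sub_cancel' hk, ← Stream'.drop_drop, Stream'.drop_append_stream,
      ← Stream'.drop_append_stream u y, Stream'.drop_drop]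
    exact hy _
  · obtain ⟨j, hj, hq⟩ := h ⟨k, hk, rfl⟩
    have hmem : y ∈ streamQuotient X (u.drop j) := by
      change u.drop j ++ₛ y ∈ X
      rw [← Stream'.drop_append_stream_of_le_length (le_of_lt hj)]
      exact hy j
    rw [Stream'.drop_append_stream_of_le_length hk.le]
    change y ∈ streamQuotient X (u'.drop k)
    rwa [← show streamQuotient X (u.drop j) = streamQuotient X (u'.drop k) from hq]

lemma append_mem_factorLang_of_quotientProfile_eq {u u' v : List ℤ}
    (h : quotientProfile X u = quotientProfile X u')
    (hv : u ++ v ∈ factorLang {w | ∀ n, shiftStream w n ∈ X}) :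
    u' ++ v ∈ factorLang {w | ∀ n, shiftStream w n ∈ X} := by
  obtain ⟨w, hw, hfac⟩ := hv
  obtain ⟨n, s, hn⟩ := isFactorOf_iff_exists_append.1 hfac
  rw [Stream'.append_append_stream] at hn
  obtain ⟨W, hWw, hWn⟩ := exists_update_shiftStream w n (u' ++ₛ (v ++ₛ s))
  refine ⟨W, fun m => ?_, isFactorOf_iff_exists_append.2 ⟨n, s, by simpa using hWn⟩⟩
  rcases lt_or_ge m n with hm | hm
  · set win := Stream'.take (n - m).toNat (shiftStream w m)
    have hwin : Stream'.take (n - m).toNat (shiftStream W m) = win := by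
      refine List.ext_getElem (by simp only [win, Stream'.length_take]) fun i hi _ => ?_
      rw [Stream'.take_get, Stream'.take_get]
      rw [Stream'.length_take] at hi
      exact hWw _ (by omega)
    have hq : streamQuotient (streamQuotient X win) u = streamQuotient (streamQuotient X win) u' :=
      congrFun (congrArg Prod.fst h) ⟨streamQuotient X win, win, rfl⟩
    have hmem : v ++ₛ s ∈ streamQuotient (streamQuotient X win) u := by
      have := hw m
      rwa [shiftStream_eq_take_append w hm.le, hn] at this
    rw [hq] at hmem
    rwa [shiftStream_eq_take_append W hm.le, hwin, hWn]
  · rw [show m = n + (m - n).toNat by omega, shiftStream_add_nat, hWn]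
    refine drop_append_mem_of_quotientProfile_subset (fun k => ?_) (congrArg Prod.snd h).ge _
    rw [← hn, ← shiftStream_add_nat]
    exact hw _

theorem isRegular_factorLang (hX : (range (streamQuotient X)).Finite) :
    (factorLang {w | ∀ n, shiftStream w n ∈ X}).IsRegular := by
  have hfactors : (factorLang {w | ∀ n, shiftStream w n ∈ X}).leftQuotient.FactorsThrough
      (quotientProfile X) := fun u u' h => Set.ext fun v =>
    ⟨append_mem_factorLang_of_quotientProfile_eq h,
      append_mem_factorLang_of_quotientProfile_eq h.symm⟩
  refine Language.IsRegular.of_finite_range_leftQuotient ?_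
  rw [← hfactors.extend_comp default, range_comp]
  exact (finite_range_quotientProfile X hX).image _

end FactorLanguage

section NegBetaExpansion

lemma negBetaT_mem_Ico (β x : ℝ) : negBetaT β x ∈ Ico (-(β / (β + 1))) (1 - β / (β + 1)) := by
  have hfract : negBetaT β x = Int.fract (-β * x + β / (β + 1)) - β / (β + 1) := by
    rw [negBetaT, Int.fract]
    ring
  rw [hfract]
  constructor <;> linarith [Int.fract_nonneg (-β * x + β / (β + 1)),
    Int.fract_lt_one (-β * x + β / (β + 1))]

lemma abs_iterate_negBetaT_le_one {β : ℝ} (hβ : 0 ≤ β) (n : ℕ) :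
    |(negBetaT β)^[n] (-β / (β + 1))| ≤ 1 := by
  have hc : β / (β + 1) ≤ 1 := div_le_one_of_le₀ (by linarith) (by linarith)
  have hc' : 0 ≤ β / (β + 1) := by positivity
  rcases n with _ | n
  · rw [Function.iterate_zero_apply, neg_div, abs_neg, abs_of_nonneg hc']
    exact hc
  · rw [Function.iterate_succ_apply']
    obtain ⟨h1, h2⟩ := negBetaT_mem_Ico β ((negBetaT β)^[n] (-β / (β + 1)))
    exact abs_le.2 ⟨by linarith, by linarith⟩

lemma iterate_succ_negBetaT (β x : ℝ) (n : ℕ) :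
    (negBetaT β)^[n + 1] x = -β * (negBetaT β)^[n] x - negBetaDigit β x n := by
  rw [Function.iterate_succ_apply']
  rfl

lemma drop_negBetaDigit (β x : ℝ) (j : ℕ) :
    Stream'.drop j (negBetaDigit β x) = negBetaDigit β ((negBetaT β)^[j] x) := by
  funext n
  change ⌊-β * (negBetaT β)^[n + j] x + _⌋ = ⌊-β * (negBetaT β)^[n] ((negBetaT β)^[j] x) + _⌋
  rw [Function.iterate_add_apply]

lemma finite_range_drop_negBetaDigit {β x : ℝ}
    (h : (range fun n => (negBetaT β)^[n] x).Finite) :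
    (range fun j => Stream'.drop j (negBetaDigit β x)).Finite := by
  refine (h.image (negBetaDigit β)).subset ?_
  rintro _ ⟨j, rfl⟩
  exact ⟨_, ⟨j, rfl⟩, (drop_negBetaDigit β x j).symm⟩

lemma abs_dmb_le {β : ℝ} (hβ : 0 ≤ β) (n : ℕ) : |(dmb β n : ℝ)| ≤ β + 1 := by
  have hd : (dmb β n : ℝ) = -β * (negBetaT β)^[n] (-β / (β + 1)) -
      (negBetaT β)^[n + 1] (-β / (β + 1)) := by
    rw [iterate_succ_negBetaT, dmb]
    ring
  have h0 := abs_iterate_negBetaT_le_one hβ n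
  have h1 := abs_iterate_negBetaT_le_one hβ (n + 1)
  rw [hd]
  calc _ ≤ |-β * (negBetaT β)^[n] (-β / (β + 1))| + |(negBetaT β)^[n + 1] (-β / (β + 1))| :=
        abs_sub _ _
    _ ≤ β * 1 + 1 := by
        rw [abs_mul, abs_neg, abs_of_nonneg hβ]
        gcongr
    _ = β + 1 := by ring

end NegBetaExpansion

section Pisot

lemma bddAbove_range_norm_of_recurrence {E : Type*} [SeminormedRing E] {t : E} (ht : ‖t‖ < 1)
    {a c : ℕ → E} (hc : BddAbove (range fun n => ‖c n‖)) (hrec : ∀ n, a (n + 1) = t * a n + c n) :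
    BddAbove (range fun n => ‖a n‖) := by
  obtain ⟨C, hC⟩ := hc
  rw [mem_upperBounds, forall_mem_range] at hC
  set R := max ‖a 0‖ (C / (1 - ‖t‖))
  have hCR : C ≤ (1 - ‖t‖) * R := by
    rw [← div_le_iff₀' (by linarith)]
    exact le_max_right _ _
  refine ⟨R, forall_mem_range.2 fun n => ?_⟩
  induction n with
  | zero => exact le_max_left _ _
  | succ n ih =>
    calc ‖a (n + 1)‖ ≤ ‖t‖ * ‖a n‖ + ‖c n‖ := by
          rw [hrec]
          exact (norm_add_le _ _).trans (by gcongr; exact norm_mul_le _ _)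
      _ ≤ ‖t‖ * R + C := by gcongr; exact hC n
      _ ≤ R := by linarith

lemma finite_range_of_isIntegral_of_bddAbove_norm {K ι : Type*} [Field K] [NumberField K]
    {z : ι → K} (hz : ∀ i, IsIntegral ℤ (z i))
    (hbdd : ∀ φ : K →+* ℂ, BddAbove (range fun i => ‖φ (z i)‖)) : (range z).Finite := by
  choose B hB using hbdd
  obtain ⟨C, hC⟩ := Finite.exists_le B
  refine (NumberField.Embeddings.finite_of_norm_le K ℂ C).subset ?_
  rintro _ ⟨i, rfl⟩
  exact ⟨hz i, fun φ => (hB φ ⟨i, rfl⟩).trans (hC φ)⟩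

open IntermediateField

/-- `(β + 1) T_{-β}^n(-β/(β+1))`, computed in `ℚ(β)`. -/
noncomputable def scaledNegBetaOrbit (β : ℝ) : ℕ → ℚ⟮β⟯
  | 0 => -AdjoinSimple.gen ℚ β
  | n + 1 => -AdjoinSimple.gen ℚ β * scaledNegBetaOrbit β n -
      (AdjoinSimple.gen ℚ β + 1) * dmb β n

lemma algebraMap_scaledNegBetaOrbit {β : ℝ} (hβ : β + 1 ≠ 0) (n : ℕ) :
    algebraMap ℚ⟮β⟯ ℝ (scaledNegBetaOrbit β n) = (β + 1) * (negBetaT β)^[n] (-β / (β + 1)) := by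
  induction n with
  | zero =>
    simp only [scaledNegBetaOrbit, map_neg, AdjoinSimple.algebraMap_gen,
      Function.iterate_zero_apply]
    field_simp
  | succ n ih =>
    simp only [scaledNegBetaOrbit, map_sub, map_mul, map_neg, map_add, map_one, map_intCast,
      AdjoinSimple.algebraMap_gen, ih, iterate_succ_negBetaT, dmb]
    ring

lemma isIntegral_scaledNegBetaOrbit {β : ℝ} (hβ : IsIntegral ℤ β) (n : ℕ) :
    IsIntegral ℤ (scaledNegBetaOrbit β n) := by
  have hgen : IsIntegral ℤ (AdjoinSimple.gen ℚ β) := by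
    rwa [← isIntegral_algebraMap_iff (algebraMap ℚ⟮β⟯ ℝ).injective, AdjoinSimple.algebraMap_gen]
  induction n with
  | zero => exact hgen.neg
  | succ n ih =>
    exact (hgen.neg.mul ih).sub
      ((hgen.add isIntegral_one).mul (isIntegral_algebraMap (x := dmb β n)))

lemma aeval_apply_gen_minpoly {β : ℝ} (φ : ℚ⟮β⟯ →+* ℂ) :
    Polynomial.aeval (φ (AdjoinSimple.gen ℚ β)) (minpoly ℤ β) = 0 := by
  have hminpoly := minpoly.algebraMap_eq (A := ℤ) (algebraMap ℚ⟮β⟯ ℝ).injective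
    (AdjoinSimple.gen ℚ β)
  rw [AdjoinSimple.algebraMap_gen] at hminpoly
  rw [hminpoly]
  exact (Polynomial.aeval_algHom_apply φ.toIntAlgHom _ _).trans (by rw [minpoly.aeval, map_zero])

lemma eq_ofReal_algebraMap_of_apply_gen {β : ℝ} {φ : ℚ⟮β⟯ →+* ℂ}
    (hφ : φ (AdjoinSimple.gen ℚ β) = β) (q : ℚ⟮β⟯) : φ q = algebraMap ℚ⟮β⟯ ℝ q := by
  have hext : φ.toRatAlgHom = (Complex.ofRealHom.comp (algebraMap ℚ⟮β⟯ ℝ)).toRatAlgHom := by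
    refine adjoin_algHom_ext ℚ fun x hx => ?_
    rw [mem_singleton_iff] at hx
    subst hx
    exact hφ
  exact congrArg (fun f : ℚ⟮β⟯ →ₐ[ℚ] ℂ => f q) hext

theorem IsPisot.finite_range_negBetaOrbit {β : ℝ} (hβ : IsPisot β) :
    (range fun n => (negBetaT β)^[n] (-β / (β + 1))).Finite := by
  obtain ⟨hβ1, hβint, hconj⟩ := hβ
  have : FiniteDimensional ℚ ℚ⟮β⟯ := adjoin.finiteDimensional hβint.tower_top
  have : NumberField ℚ⟮β⟯ := ⟨⟩
  set b := AdjoinSimple.gen ℚ β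
  have hz : (range (scaledNegBetaOrbit β)).Finite := by
    refine finite_range_of_isIntegral_of_bddAbove_norm (isIntegral_scaledNegBetaOrbit hβint)
      fun φ => ?_
    by_cases hφ : φ b = β
    · refine ⟨β + 1, forall_mem_range.2 fun n => ?_⟩
      rw [eq_ofReal_algebraMap_of_apply_gen hφ, Complex.norm_real, Real.norm_eq_abs,
        algebraMap_scaledNegBetaOrbit (by linarith), abs_mul, abs_of_pos (by linarith)]
      exact mul_le_of_le_one_right (by linarith) (abs_iterate_negBetaT_le_one (by linarith) n)
    · have hcontr : ‖φ (-b)‖ < 1 := by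
        rw [map_neg, norm_neg]
        exact hconj _ (aeval_apply_gen_minpoly φ) hφ
      refine bddAbove_range_norm_of_recurrence hcontr (c := fun n => -(φ (b + 1) * dmb β n))
        ⟨‖φ (b + 1)‖ * (β + 1), forall_mem_range.2 fun n => ?_⟩ fun n => ?_
      · rw [norm_neg, norm_mul, Complex.norm_intCast]
        exact mul_le_mul_of_nonneg_left (abs_dmb_le (by linarith) n) (norm_nonneg _)
      · simp only [scaledNegBetaOrbit, map_sub, map_mul, map_intCast, b]
        ring
  refine (hz.image fun q => algebraMap ℚ⟮β⟯ ℝ q / (β + 1)).subset ?_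
  rintro _ ⟨n, rfl⟩
  refine ⟨_, ⟨n, rfl⟩, ?_⟩
  dsimp only
  rw [algebraMap_scaledNegBetaOrbit (by linarith)]
  field_simp

end Pisot

section NegBetaShift

lemma finite_range_drop_dstar {β : ℝ} (h : (range fun j => Stream'.drop j (dmb β)).Finite) :
    (range fun j => Stream'.drop j (dstar β)).Finite := by
  unfold dstar
  split_ifs with hper
  · exact finite_range_drop_of_periodic (q := Nat.find hper + 1) (Nat.succ_pos _)
      fun n => by simp only [Nat.add_mod_right]
  · convert finite_range_drop_cons 0 h using 3
    congr 1
    funext n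
    rcases n with _ | n <;> rfl

def negBetaAdmissible (β : ℝ) : Set (Stream' ℤ) :=
  {s | s.head ∈ Icc 0 ⌊β⌋} ∩ ({s | AltLe (dmb β) s} ∩ {s | AltLe s (dstar β)})

lemma negBetaShift_eq (β : ℝ) :
    negBetaShift β = {w | ∀ n, shiftStream w n ∈ negBetaAdmissible β} := by
  ext w
  have hhead : ∀ n, (shiftStream w n).head = w n := fun n => congrArg w (add_zero n)
  simp only [negBetaShift, negBetaAdmissible, mem_inter_iff, mem_ofPred_eq, hhead]
  exact ⟨fun ⟨hdig, halt⟩ n => ⟨hdig n, halt n⟩, fun h => ⟨fun n => (h n).1, fun n => (h n).2⟩⟩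

lemma finite_range_streamQuotient_negBetaAdmissible {β : ℝ}
    (h : (range fun j => Stream'.drop j (dmb β)).Finite) :
    (range (streamQuotient (negBetaAdmissible β))).Finite := by
  refine IsQuotientClosed.finite_range_streamQuotient
    (𝓕 := image2 (· ∩ ·) {{s | s.head ∈ Icc 0 ⌊β⌋}, ∅, univ}
      (image2 (· ∩ ·) (altLeFamily (dmb β)) (altLeFamily (dstar β))))
    ((isQuotientClosed_head _).image2_inter ((isQuotientClosed_altLeFamily _).image2_inter
      (isQuotientClosed_altLeFamily _))) ?_ ?_
  · exact (toFinite _).image2 _ ((altLeFamily_finite h).image2 _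
      (altLeFamily_finite (finite_range_drop_dstar h)))
  · exact ⟨_, Or.inl rfl, _, ⟨_, Or.inl (Or.inr ⟨0, rfl⟩), _, Or.inr ⟨0, rfl⟩, rfl⟩, rfl⟩

end NegBetaShift

/-- If `β` is a Pisot number, then the (-β)-shift is a sofic system: its language of
finite factors is regular. -/
theorem negBetaShift_sofic_of_pisot (β : ℝ) (hβ : IsPisot β) :
    (factorLang (negBetaShift β)).IsRegular := by
  have hdigits : (range fun j => Stream'.drop j (dmb β)).Finite :=
    finite_range_drop_negBetaDigit hβ.finite_range_negBetaOrbit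
  rw [negBetaShift_eq]
  exact isRegular_factorLang (finite_range_streamQuotient_negBetaAdmissible hdigits)
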